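/- arXiv:math/0601484 — 10 statements merged into one kernel-verified Lean document; each statement's English description precedes it below -/
import Mathlib

section
/- Let V be a finite-dimensional real inner product space, p ≥ 1, let φ be an alternating p-form on V of comass at most one, let A be a linear endomorphism of V, and let e = (e_1,…,e_p) be a φ-plane. Then (λ_φ A)(e_1,…,e_p) = Σ_{j=1}^p ⟨A e_j, e_j⟩; that is, Σ_{j=1}^p φ(e_1,…,e_{j−1}, A e_j, e_{j+1},…,e_p) = Σ_{j=1}^p ⟨A e_j, e_j⟩ (the value of λ_φ(A) on a φ-plane equals the trace of A restricted to that plane). -/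
/-!
A `φ`-plane maximises `φ` among orthonormal tuples. Turning `e j` towards a unit vector `u`
orthogonal to the plane keeps the tuple orthonormal, so `a + b * φ(e; e j ↦ u) ≤ 1` whenever
`a² + b² = 1`; this first-variation inequality forces `φ(e; e j ↦ u) = 0`. Hence the linear
functional `v ↦ φ(e; e j ↦ v)` vanishes on the orthogonal complement of the plane, while on the
plane it is `⟪v, e j⟫` because `φ` is alternating and `φ e = 1`. Summing over `j` gives the trace.
-/

open scoped InnerProductSpace RealInnerProductSpace
open Function

theorem eq_zero_of_forall_add_mul_le_one {c : ℝ}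
    (h : ∀ a b : ℝ, a ^ 2 + b ^ 2 = 1 → a + b * c ≤ 1) : c = 0 := by
  -- the point `((1 - t²) / (1 + t²), 2t / (1 + t²))` of the unit circle at `t = c / 2`
  have hpos : 0 < 1 + (c / 2) ^ 2 := by positivity
  have hle := h ((1 - (c / 2) ^ 2) / (1 + (c / 2) ^ 2)) (c / (1 + (c / 2) ^ 2))
    (by field_simp; ring)
  rw [div_mul_eq_mul_div, ← add_div, div_le_one hpos] at hle
  nlinarith

theorem Orthonormal.update_of_orthogonal {𝕜 E ι : Type*} [RCLike 𝕜] [NormedAddCommGroup E]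
    [InnerProductSpace 𝕜 E] [DecidableEq ι] {e : ι → E} (he : Orthonormal 𝕜 e) (j : ι) {x : E}
    (hx : ‖x‖ = 1) (hxe : ∀ i ≠ j, ⟪e i, x⟫_𝕜 = 0) : Orthonormal 𝕜 (update e j x) := by
  refine ⟨fun i => ?_, fun i k hik => ?_⟩
  · rcases eq_or_ne i j with rfl | hij
    · simpa using hx
    · simpa [hij] using he.1 i
  · rcases eq_or_ne i j with rfl | hij
    · rw [← inner_conj_symm]
      simp [Ne.symm hik, hxe k (Ne.symm hik)]
    · rcases eq_or_ne k j with rfl | hkj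
      · simpa [hij] using hxe i hij
      · simpa [hij, hkj] using he.2 hik

theorem Orthonormal.update_rotate {V ι : Type*} [NormedAddCommGroup V] [InnerProductSpace ℝ V]
    [DecidableEq ι] {e : ι → V} (he : Orthonormal ℝ e) (j : ι) {u : V} (hu : ‖u‖ = 1)
    (hue : ∀ i, ⟪e i, u⟫ = 0) {a b : ℝ} (hab : a ^ 2 + b ^ 2 = 1) :
    Orthonormal ℝ (update e j (a • e j + b • u)) := by
  refine he.update_of_orthogonal j ?_ fun i hij => ?_
  · have hsq : ‖a • e j + b • u‖ * ‖a • e j + b • u‖ = 1 := by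
      rw [norm_add_sq_eq_norm_sq_add_norm_sq_real (by simp [inner_smul_left,
        inner_smul_right, hue]), norm_smul, norm_smul, he.1 j, hu]
      simpa only [Real.norm_eq_abs, mul_one, abs_mul_abs_self, sq] using hab
    exact (mul_self_eq_one_iff.1 hsq).resolve_right (by linarith [norm_nonneg (a • e j + b • u)])
  · simp [inner_add_right, inner_smul_right, he.2 hij, hue]

section PhiPlane

variable {V ι : Type*} [NormedAddCommGroup V] [InnerProductSpace ℝ V] [DecidableEq ι]
  {φ : V [⋀^ι]→ₗ[ℝ] ℝ} {e : ι → V}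

theorem AlternatingMap.map_update_eq_zero_of_forall_inner_eq_zero
    (hcomass : ∀ u : ι → V, Orthonormal ℝ u → φ u ≤ 1) (he : Orthonormal ℝ e) (heφ : φ e = 1)
    (j : ι) {w : V} (hw : ∀ i, ⟪e i, w⟫ = 0) : φ (update e j w) = 0 := by
  rcases eq_or_ne w 0 with rfl | hw0
  · exact φ.toMultilinearMap.map_update_zero e j
  set u := ‖w‖⁻¹ • w
  have hu : ‖u‖ = 1 := norm_smul_inv_norm hw0
  have hue : ∀ i, ⟪e i, u⟫ = 0 := fun i => by simp [u, inner_smul_right, hw i]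
  have hc : φ (update e j u) = 0 := by
    refine eq_zero_of_forall_add_mul_le_one fun a b hab => ?_
    have hle := hcomass _ (he.update_rotate j hu hue hab)
    rwa [φ.map_update_add, φ.map_update_smul, φ.map_update_smul, update_eq_self, heφ,
      smul_eq_mul, smul_eq_mul, mul_one] at hle
  have hwu : w = ‖w‖ • u := by simp [u, smul_smul, norm_ne_zero_iff.2 hw0]
  rw [hwu, φ.map_update_smul, hc, smul_zero]

theorem AlternatingMap.map_update_eq_inner [Fintype ι]
    (hcomass : ∀ u : ι → V, Orthonormal ℝ u → φ u ≤ 1) (he : Orthonormal ℝ e) (heφ : φ e = 1)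
    (j : ι) (v : V) : φ (update e j v) = ⟪v, e j⟫ := by
  set P := ∑ k, ⟪v, e k⟫ • e k
  have hperp : ∀ i, ⟪e i, v - P⟫ = 0 := fun i => by
    rw [inner_sub_right, he.inner_right_fintype, real_inner_comm, sub_self]
  have hbasis : ∀ k, φ (update e j (e k)) = if k = j then 1 else 0 := fun k => by
    split_ifs with hkj
    · rw [hkj, update_eq_self, heφ]
    · exact φ.map_update_self e (Ne.symm hkj)
  calc φ (update e j v) = φ (update e j (P + (v - P))) := by rw [add_sub_cancel]
    _ = ∑ k, ⟪v, e k⟫ * φ (update e j (e k)) := by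
      rw [φ.map_update_add, map_update_eq_zero_of_forall_inner_eq_zero hcomass he heφ j hperp,
        add_zero, φ.map_update_sum]
      simp only [φ.map_update_smul, smul_eq_mul]
    _ = ⟪v, e j⟫ := by simp [hbasis]

end PhiPlane

theorem lambda_phi_eq_trace_on_phi_plane_general
    {V : Type*} [NormedAddCommGroup V] [InnerProductSpace ℝ V]
    {p : ℕ}
    (φ : V [⋀^Fin p]→ₗ[ℝ] ℝ)
    (hcomass : ∀ u : Fin p → V, Orthonormal ℝ u → φ u ≤ 1)
    (A : V →ₗ[ℝ] V) (e : Fin p → V)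
    (he : Orthonormal ℝ e) (heφ : φ e = 1) :
    ∑ j, φ (Function.update e j (A (e j))) = ∑ j, ⟪A (e j), e j⟫ :=
  Finset.sum_congr rfl fun j _ => φ.map_update_eq_inner hcomass he heφ j (A (e j))

/-- **Theorem 2.3** (Harvey–Lawson, "Plurisubharmonic functions in calibrated geometries").
The value of `λ_φ(A)` on a `φ`-plane equals the trace of `A` restricted to that plane. -/
theorem lambda_phi_eq_trace_on_phi_plane
    {V : Type*} [NormedAddCommGroup V] [InnerProductSpace ℝ V]
    [FiniteDimensional ℝ V] {p : ℕ} (hp : 1 ≤ p)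
    (φ : V [⋀^Fin p]→ₗ[ℝ] ℝ)
    (hcomass : ∀ u : Fin p → V, Orthonormal ℝ u → φ u ≤ 1)
    (A : V →ₗ[ℝ] V) (e : Fin p → V)
    (he : Orthonormal ℝ e) (heφ : φ e = 1) :
    ∑ j, φ (Function.update e j (A (e j))) = ∑ j, ⟪A (e j), e j⟫ :=
  lambda_phi_eq_trace_on_phi_plane_general φ hcomass A e he heφ
end

section
/- Let V be a finite-dimensional real inner product space, p ≥ 1, let φ be an alternating p-form on V of comass at most one, and let e = (e_1,…,e_p) be a φ-plane. Then for every vector b ∈ V orthogonal to each of e_1,…,e_p and for every index i ∈ {1,…,p}, φ(e_1,…,e_{i−1}, b, e_{i+1},…,e_p) = 0; that is, φ vanishes on every first cousin of the φ-plane (the First Cousin Principle). -/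
/-!
Fix all entries of the `φ`-plane but the `i`-th: `v ↦ φ (update e i v)` is a linear functional,
and it is bounded by `‖v‖` on the vectors orthogonal to the other `e j`, because a unit such
vector completes them to an orthonormal tuple. It attains this bound at the unit vector `e i`,
so `e i` is its Riesz vector there, and the functional vanishes on everything orthogonal
to `e i`, in particular on `b`.
-/
open scoped RealInnerProductSpace

section
variable {V : Type*} [NormedAddCommGroup V] [InnerProductSpace ℝ V]

theorem Orthonormal.update {ι : Type*} [DecidableEq ι] {e : ι → V} (he : Orthonormal ℝ e)
    {i : ι} {v : V} (hv : ‖v‖ = 1) (hve : ∀ j ≠ i, ⟪e j, v⟫ = 0) :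
    Orthonormal ℝ (Function.update e i v) := by
  rw [orthonormal_iff_ite] at he ⊢
  intro j k
  by_cases hj : j = i <;> by_cases hk : k = i
  · subst hj hk
    simp [hv]
  · subst hj
    rw [real_inner_comm, Function.update_of_ne hk, Function.update_self, hve k hk,
      if_neg (Ne.symm hk)]
  · subst hk
    simp [hj, hve j hj]
  · simp [hj, hk, he]

theorem LinearMap.le_norm_of_forall_norm_eq_one {f : V →ₗ[ℝ] ℝ} {W : Submodule ℝ V}
    (hf : ∀ v ∈ W, ‖v‖ = 1 → f v ≤ 1) {v : V} (hv : v ∈ W) : f v ≤ ‖v‖ := by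
  rcases eq_or_ne v 0 with rfl | hv0
  · simp
  have hnorm : ‖v‖ ≠ 0 := norm_ne_zero_iff.mpr hv0
  calc f v = ‖v‖ * f (‖v‖⁻¹ • v) := by
        rw [map_smul, smul_eq_mul, mul_inv_cancel_left₀ hnorm]
    _ ≤ ‖v‖ * 1 := by
        gcongr
        exact hf _ (W.smul_mem _ hv) (norm_smul_inv_norm hv0)
    _ = ‖v‖ := mul_one _

theorem LinearMap.apply_eq_zero_of_le_norm {f : V →ₗ[ℝ] ℝ} {W : Submodule ℝ V}
    (hf : ∀ v ∈ W, f v ≤ ‖v‖) {x y : V} (hx : x ∈ W) (hy : y ∈ W) (hx1 : ‖x‖ = 1)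
    (hfx : f x = 1) (hxy : ⟪x, y⟫ = 0) : f y = 0 := by
  set a := f y
  set s := ‖y‖ ^ 2
  -- `s • x + a • y` is a multiple of the Riesz vector of `f` on `span {x, y}`
  have hval : f (s • x + a • y) = s + a ^ 2 := by simp [hfx, sq, a]
  have hnorm : ‖s • x + a • y‖ ^ 2 = s * (s + a ^ 2) := by
    rw [norm_add_sq_real, norm_smul, norm_smul, inner_smul_left, inner_smul_right, hxy, hx1]
    simp only [norm_pow, mul_one, Real.ringHom_apply, mul_zero, add_zero,
      Real.norm_eq_abs, mul_pow, sq_abs, s]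
    ring
  have hle := hf _ (W.add_mem (W.smul_mem s hx) (W.smul_mem a hy))
  rw [hval] at hle
  have hs : 0 ≤ s := sq_nonneg _
  have hsq : (s + a ^ 2) ^ 2 ≤ s * (s + a ^ 2) := hnorm ▸ pow_le_pow_left₀ (by positivity) hle 2
  have ha4 : (a ^ 2) ^ 2 ≤ 0 := by nlinarith [mul_nonneg hs (sq_nonneg a)]
  exact pow_eq_zero_iff two_ne_zero |>.mp <| pow_eq_zero_iff two_ne_zero |>.mp <|
    le_antisymm ha4 (sq_nonneg _)
end

theorem first_cousin_principle_general
    {V : Type*} [NormedAddCommGroup V] [InnerProductSpace ℝ V]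
    {p : ℕ}
    (φ : V [⋀^Fin p]→ₗ[ℝ] ℝ)
    (hcomass : ∀ u : Fin p → V, Orthonormal ℝ u → φ u ≤ 1)
    (e : Fin p → V) (he : Orthonormal ℝ e) (heφ : φ e = 1)
    (b : V) (hb : ∀ j, ⟪b, e j⟫ = 0) (i : Fin p) :
    φ (Function.update e i b) = 0 := by
  let f : V →ₗ[ℝ] ℝ := φ.toMultilinearMap.toLinearMap e i
  let W : Submodule ℝ V := ⨅ (j) (_ : j ≠ i), (innerₛₗ ℝ (e j)).ker
  have mem_W (v : V) : v ∈ W ↔ ∀ j ≠ i, ⟪e j, v⟫ = 0 := by simp [W]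
  have hf : ∀ v ∈ W, f v ≤ ‖v‖ := fun v hv =>
    f.le_norm_of_forall_norm_eq_one
      (fun u hu hu1 => hcomass _ (he.update hu1 ((mem_W u).1 hu))) hv
  have hei : e i ∈ W := (mem_W _).2 fun j hj => he.2 hj
  have hbW : b ∈ W := (mem_W _).2 fun j _ => by rw [real_inner_comm, hb]
  simpa [f] using f.apply_eq_zero_of_le_norm hf hei hbW (he.1 i) (by simpa [f] using heφ)
    (by rw [real_inner_comm, hb])

/-- **Lemma 2.4 (The First Cousin Principle)** (Harvey–Lawson).
A comass-one form `φ` vanishes on every first cousin of a `φ`-plane: replacing one vector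
of a `φ`-plane by a vector orthogonal to the plane gives a `p`-tuple on which `φ` is zero. -/
theorem first_cousin_principle
    {V : Type*} [NormedAddCommGroup V] [InnerProductSpace ℝ V]
    [FiniteDimensional ℝ V] {p : ℕ} (hp : 1 ≤ p)
    (φ : V [⋀^Fin p]→ₗ[ℝ] ℝ)
    (hcomass : ∀ u : Fin p → V, Orthonormal ℝ u → φ u ≤ 1)
    (e : Fin p → V) (he : Orthonormal ℝ e) (heφ : φ e = 1)
    (b : V) (hb : ∀ j, ⟪b, e j⟫ = 0) (i : Fin p) :
    φ (Function.update e i b) = 0 :=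
  first_cousin_principle_general φ hcomass e he heφ b hb i
end

section
/- Let V be a finite-dimensional real inner product space, p ≥ 1, let φ be an alternating p-form on V, and let e = (e_1,…,e_p) be an orthonormal p-tuple that is φ-critical, i.e. φ(e_1,…,e_{i−1}, b, e_{i+1},…,e_p) = 0 for every index i and every vector b orthogonal to span{e_1,…,e_p}. Then for every linear endomorphism A of V, (λ_φ A)(e_1,…,e_p) = (Σ_{j=1}^p ⟨A e_j, e_j⟩) · φ(e_1,…,e_p). -/
open scoped RealInnerProductSpace

/-! Split `v = ∑ₖ ⟪e k, v⟫ • e k + b` with `b ⟂ e`. Criticality kills `φ` on the `b`-part, and in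
the `e`-part every `e k` with `k ≠ i` repeats an argument of `φ`, so only `⟪e i, v⟫ • φ e`
survives. Summing over `i` with `v = A (e i)` gives the theorem. -/

theorem AlternatingMap.map_update_sum_smul_self {R M N ι : Type*} [Semiring R]
    [AddCommMonoid M] [Module R M] [AddCommMonoid N] [Module R N] [Fintype ι] [DecidableEq ι]
    (f : M [⋀^ι]→ₗ[R] N) (v : ι → M) (c : ι → R) (i : ι) :
    f (Function.update v i (∑ k, c k • v k)) = c i • f v := by
  rw [f.map_update_sum, Finset.sum_eq_single i]
  · rw [f.map_update_smul, Function.update_eq_self]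
  · intro k _ hki
    rw [f.map_update_smul, f.map_update_self v hki.symm, smul_zero]
  · simp

theorem Orthonormal.inner_sub_sum_inner_smul_eq_zero {𝕜 E ι : Type*} [RCLike 𝕜]
    [NormedAddCommGroup E] [InnerProductSpace 𝕜 E] [Fintype ι] {e : ι → E}
    (he : Orthonormal 𝕜 e) (v : E) (l : ι) :
    inner 𝕜 (v - ∑ k, inner 𝕜 (e k) v • e k) (e l) = 0 := by
  rw [inner_sub_left, he.inner_left_fintype, inner_conj_symm, sub_self]

theorem AlternatingMap.map_update_eq_inner_smul_of_critical {𝕜 E N ι : Type*} [RCLike 𝕜]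
    [NormedAddCommGroup E] [InnerProductSpace 𝕜 E] [AddCommMonoid N] [Module 𝕜 N]
    [Fintype ι] [DecidableEq ι] (φ : E [⋀^ι]→ₗ[𝕜] N) {e : ι → E} (he : Orthonormal 𝕜 e)
    (hcrit : ∀ (i : ι) (b : E), (∀ j, inner 𝕜 b (e j) = 0) → φ (Function.update e i b) = 0)
    (i : ι) (v : E) :
    φ (Function.update e i v) = inner 𝕜 (e i) v • φ e := by
  have hsplit : v = ∑ k, inner 𝕜 (e k) v • e k + (v - ∑ k, inner 𝕜 (e k) v • e k) :=
    (add_sub_cancel _ _).symm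
  conv_lhs => rw [hsplit]
  rw [φ.map_update_add, φ.map_update_sum_smul_self,
    hcrit i _ (he.inner_sub_sum_inner_smul_eq_zero v), add_zero]

theorem lambda_phi_on_phi_critical_general
    {V : Type*} [NormedAddCommGroup V] [InnerProductSpace ℝ V]
    {p : ℕ}
    (φ : V [⋀^Fin p]→ₗ[ℝ] ℝ)
    (e : Fin p → V) (he : Orthonormal ℝ e)
    (hcrit : ∀ (i : Fin p) (b : V), (∀ j, ⟪b, e j⟫ = 0) →
      φ (Function.update e i b) = 0)
    (A : V →ₗ[ℝ] V) :
    ∑ j, φ (Function.update e j (A (e j))) = (∑ j, ⟪A (e j), e j⟫) * φ e := by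
  rw [Finset.sum_mul]
  refine Finset.sum_congr rfl fun j _ => ?_
  rw [φ.map_update_eq_inner_smul_of_critical he hcrit, real_inner_comm, smul_eq_mul]

/-- **Proposition 2.A.2** (Harvey–Lawson).  If the orthonormal `p`-tuple `e` is `φ`-critical
(i.e. `φ` vanishes on all first cousins of `e`), then for every endomorphism `A`,
`(λ_φ A)(e) = (tr_e A) · φ(e)`. -/
theorem lambda_phi_on_phi_critical
    {V : Type*} [NormedAddCommGroup V] [InnerProductSpace ℝ V]
    [FiniteDimensional ℝ V] {p : ℕ} (hp : 1 ≤ p)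
    (φ : V [⋀^Fin p]→ₗ[ℝ] ℝ)
    (e : Fin p → V) (he : Orthonormal ℝ e)
    (hcrit : ∀ (i : Fin p) (b : V), (∀ j, ⟪b, e j⟫ = 0) →
      φ (Function.update e i b) = 0)
    (A : V →ₗ[ℝ] V) :
    ∑ j, φ (Function.update e j (A (e j))) = (∑ j, ⟪A (e j), e j⟫) * φ e :=
  lambda_phi_on_phi_critical_general φ e he hcrit A
end

section
/- Let V be a finite-dimensional real inner product space, p ≥ 1, let φ be an alternating p-form on V, let A be a linear endomorphism of V, and let e = (e_1,…,e_p) be any orthonormal p-tuple of vectors of V. Let Q denote the orthogonal projection of V onto the orthogonal complement of span{e_1,…,e_p}. Then (λ_φ A)(e_1,…,e_p) = (Σ_{j=1}^p ⟨A e_j, e_j⟩) · φ(e_1,…,e_p) + Σ_{j=1}^p φ(e_1,…,e_{j−1}, Q(A e_j), e_{j+1},…,e_p). -/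
open scoped RealInnerProductSpace

/-!
Split `A e_j` into its components in `K = span{e_1,…,e_p}` and in `Kᗮ`. A vector of `K` placed in
slot `j` of `φ(e)` only contributes through its `e_j`-coordinate, since its other coordinates
reproduce a vector already present in the tuple; and the `e_j`-coordinate of the `K`-component
of `A e_j` is `⟪A e_j, e_j⟫`.
-/

namespace AlternatingMap

variable {V M ι : Type*} [NormedAddCommGroup V] [InnerProductSpace ℝ V]
  [AddCommGroup M] [Module ℝ M] [DecidableEq ι] (φ : V [⋀^ι]→ₗ[ℝ] M) {e : ι → V}

theorem map_update_eq_inner_smul_of_mem_span (he : Orthonormal ℝ e) (j : ι) {y : V}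
    (hy : y ∈ Submodule.span ℝ (Set.range e)) :
    φ (Function.update e j y) = ⟪y, e j⟫ • φ e := by
  have h_basis : Set.EqOn (φ.toMultilinearMap.toLinearMap e j)
      ((innerₛₗ ℝ (e j)).smulRight (φ e)) (Set.range e) := by
    rintro _ ⟨i, rfl⟩
    rcases eq_or_ne i j with rfl | hij
    · simp [he.1 i]
    · simp [φ.map_update_self (v := e) hij.symm, he.2 hij.symm]
  simpa [real_inner_comm] using LinearMap.eqOn_span' h_basis hy

theorem map_update_eq_inner_smul_add_starProjection_orthogonal (he : Orthonormal ℝ e) (j : ι)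
    [(Submodule.span ℝ (Set.range e)).HasOrthogonalProjection] (y : V) :
    φ (Function.update e j y) =
      ⟪y, e j⟫ • φ e +
        φ (Function.update e j ((Submodule.span ℝ (Set.range e))ᗮ.starProjection y)) := by
  set K := Submodule.span ℝ (Set.range e)
  have h_ej : e j ∈ K := Submodule.subset_span ⟨j, rfl⟩
  conv_lhs => rw [← K.starProjection_add_starProjection_orthogonal y]
  rw [φ.map_update_add, φ.map_update_eq_inner_smul_of_mem_span he j (K.starProjection_apply_mem y),
    K.inner_starProjection_left_eq_right, K.starProjection_eq_self_iff.mpr h_ej]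

end AlternatingMap

theorem lambda_phi_general_formula_general
    {V : Type*} [NormedAddCommGroup V] [InnerProductSpace ℝ V]
    [FiniteDimensional ℝ V] {p : ℕ}
    (φ : V [⋀^Fin p]→ₗ[ℝ] ℝ)
    (A : V →ₗ[ℝ] V) (e : Fin p → V) (he : Orthonormal ℝ e) :
    ∑ j, φ (Function.update e j (A (e j))) =
      (∑ j, ⟪A (e j), e j⟫) * φ e +
      ∑ j, φ (Function.update e j
        ((Submodule.orthogonalProjectionOnto (Submodule.span ℝ (Set.range e))ᗮ (A (e j)) : _) : V)) := by
  rw [Finset.sum_mul, ← Finset.sum_add_distrib]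
  exact Finset.sum_congr rfl fun j _ ↦
    φ.map_update_eq_inner_smul_add_starProjection_orthogonal he j (A (e j))

/-- **Proposition 2.A.4** (Harvey–Lawson).  For any alternating `p`-form `φ`, any endomorphism
`A` and any orthonormal `p`-tuple `e`:
`λ_φ(A)(e) = (tr_e A)·φ(e) + Σ_j φ(e_1,…,Q(A e_j),…,e_p)`, where `Q` is the orthogonal
projection onto the orthogonal complement of `span{e_1,…,e_p}`. -/
theorem lambda_phi_general_formula
    {V : Type*} [NormedAddCommGroup V] [InnerProductSpace ℝ V]
    [FiniteDimensional ℝ V] {p : ℕ} (hp : 1 ≤ p)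
    (φ : V [⋀^Fin p]→ₗ[ℝ] ℝ)
    (A : V →ₗ[ℝ] V) (e : Fin p → V) (he : Orthonormal ℝ e) :
    ∑ j, φ (Function.update e j (A (e j))) =
      (∑ j, ⟪A (e j), e j⟫) * φ e +
      ∑ j, φ (Function.update e j
        ((Submodule.orthogonalProjectionOnto (Submodule.span ℝ (Set.range e))ᗮ (A (e j)) : _) : V)) :=
  lambda_phi_general_formula_general φ A e he
end

section
/- Let V be a finite-dimensional real inner product space, p ≥ 1, let φ be an alternating p-form on V, and let ζ ∈ V. Define the alternating p-form ω = ζ♭ ∧ (ζ ⌟ φ) by ω(v_1,…,v_p) = Σ_{i=1}^p (−1)^{i−1} ⟨ζ, v_i⟩ · φ(ζ, v_1,…,v_{i−1}, v_{i+1},…,v_p). Then ω is identically zero if and only if ζ ⌟ φ is identically zero, i.e. if and only if φ(ζ, w_1,…,w_{p−1}) = 0 for all w_1,…,w_{p−1} ∈ V. (Consequently the symbol σ_ζ(dd^φ) = ζ ∧ (ζ ⌟ φ) of the operator dd^φ is injective for all ζ ≠ 0 exactly when the calibration involves all the variables, i.e. ζ ⌟ φ ≠ 0 for all ζ ≠ 0;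 so dd^φ is overdetermined elliptic if and only if φ involves all the variables.) -/
/-! Evaluated at `v = (ζ, w)`, every term of the sum except the first feeds `ζ` twice to `φ`,
so the sum collapses to `|ζ|² φ(ζ, w)`. -/

open scoped RealInnerProductSpace

namespace AlternatingMap

theorem map_cons_removeNth_succ_eq_zero {R M N : Type*} [Semiring R] [AddCommMonoid M]
    [Module R M] [AddCommMonoid N] [Module R N] {n : ℕ}
    (f : M [⋀^Fin (n + 1)]→ₗ[R] N) (v : Fin (n + 1) → M) (i : Fin n) :
    f (Fin.cons (v 0) (Fin.removeNth i.succ v)) = 0 := by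
  obtain ⟨m, rfl⟩ := Nat.exists_eq_succ_of_ne_zero i.pos.ne'
  exact f.map_eq_zero_of_eq _ (i := 0) (j := 1) (by simp [Fin.removeNth_apply]) zero_ne_one

theorem sum_neg_one_pow_mul_mul_map_cons_removeNth {R M : Type*} [Ring R] [AddCommMonoid M]
    [Module R M] {n : ℕ} (φ : M [⋀^Fin (n + 1)]→ₗ[R] R) (ℓ : M → R) (v : Fin (n + 1) → M) :
    ∑ i : Fin (n + 1), (-1 : R) ^ (i : ℕ) * ℓ (v i) * φ (Fin.cons (v 0) (Fin.removeNth i v)) =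
      ℓ (v 0) * φ v := by
  simp [Fin.sum_univ_succ, map_cons_removeNth_succ_eq_zero]

end AlternatingMap

theorem symbol_vanishes_iff_contraction_vanishes_general
    {V : Type*} [NormedAddCommGroup V] [InnerProductSpace ℝ V]
    {q : ℕ}
    (φ : V [⋀^Fin (q + 1)]→ₗ[ℝ] ℝ) (ζ : V) :
    (∀ v : Fin (q + 1) → V,
        (∑ i : Fin (q + 1), (-1 : ℝ) ^ (i : ℕ) * ⟪ζ, v i⟫ * φ (Fin.cons ζ (Fin.removeNth i v))) = 0) ↔
      (∀ w : Fin q → V, φ (Fin.cons ζ w) = 0) := by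
  refine ⟨fun h w => ?_, fun h v => Finset.sum_eq_zero fun i _ => by rw [h, mul_zero]⟩
  have key : ⟪ζ, ζ⟫ * φ (Fin.cons ζ w) = 0 := by
    have expand := φ.sum_neg_one_pow_mul_mul_map_cons_removeNth (⟪ζ, ·⟫) (Fin.cons ζ w)
    rw [Fin.cons_zero] at expand
    exact expand ▸ h (Fin.cons ζ w)
  rcases eq_or_ne ζ 0 with rfl | hζ
  · exact φ.map_coord_zero 0 rfl
  · exact (mul_eq_zero.1 key).resolve_left (inner_self_ne_zero.2 hζ)

/-- **Proposition 1.6** (Harvey–Lawson), symbol computation.  For `ζ ∈ V`, the `p`-form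
`ζ♭ ∧ (ζ ⌟ φ)` vanishes identically iff `ζ ⌟ φ` vanishes identically.  (Hence the symbol
`σ_ζ(dd^φ) = ζ ∧ (ζ ⌟ φ)` is injective for all `ζ ≠ 0` exactly when `φ` involves all the
variables, i.e. `dd^φ` is overdetermined elliptic iff `φ` involves all the variables.) -/
theorem symbol_vanishes_iff_contraction_vanishes
    {V : Type*} [NormedAddCommGroup V] [InnerProductSpace ℝ V]
    [FiniteDimensional ℝ V] {q : ℕ}
    (φ : V [⋀^Fin (q + 1)]→ₗ[ℝ] ℝ) (ζ : V) :
    (∀ v : Fin (q + 1) → V,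
        (∑ i : Fin (q + 1), (-1 : ℝ) ^ (i : ℕ) * ⟪ζ, v i⟫ * φ (Fin.cons ζ (Fin.removeNth i v))) = 0) ↔
      (∀ w : Fin q → V, φ (Fin.cons ζ w) = 0) :=
  symbol_vanishes_iff_contraction_vanishes_general φ ζ
end

section
/- Let V be a finite-dimensional real inner product space, p ≥ 1, let φ be an alternating p-form on V (a constant-coefficient, i.e. parallel, form), let U ⊆ V be open, and let f : U → ℝ be twice continuously differentiable. For x ∈ U let H_x denote the symmetric Hessian endomorphism of V determined by ⟨H_x v, w⟩ = D²f(x)(v, w), and let ∇f(x) be the gradient. Then for every x ∈ U and all vectors v_1,…,v_p ∈ V, Σ_{i=1}^p (−1)^{i−1} · D_{v_i}[ y ↦ φ(∇f(y), v_1,…,v_{i−1}, v_{i+1},…,v_p) ](x) = Σ_{j=1}^p φ(v_1,…,v_{j−1}, H_x v_j, v_{j+1},…,v_p); that is, the exterior derivative of the (p−1)-form d^φ f = ∇f ⌟ φ equals λ_φ(Hess f), so that dd^φ f = H^φ(f) in the parallel case (Theorem 2.2 with ∇_{∇f}φ = 0). -/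
open scoped RealInnerProductSpace

/-! Differentiating `y ↦ φ (∇f y, v₁, …, v̂ᵢ, …, vₚ)` in the direction `vᵢ` replaces `∇f` by `H vᵢ`,
since `φ` has constant coefficients and is linear in its first slot. Moving `H vᵢ` back to slot `i`
is a cycle of sign `(-1) ^ i`, which cancels the sign in the exterior derivative. -/

namespace AlternatingMap

variable {R M N : Type*} [CommRing R] [AddCommGroup M] [Module R M] [AddCommGroup N] [Module R N]
  {n : ℕ}

theorem map_cons_removeNth (φ : M [⋀^Fin (n + 1)]→ₗ[R] N) (v : Fin (n + 1) → M)
    (i : Fin (n + 1)) (u : M) :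
    φ (Fin.cons u (Fin.removeNth i v)) = (-1 : R) ^ (i : ℕ) • φ (Function.update v i u) := by
  have hperm : Fin.cons u (Fin.removeNth i v) = Function.update v i u ∘ ⇑i.cycleRange.symm := by
    ext j
    refine Fin.cases ?_ (fun k => ?_) j
    · simp
    · simp [Fin.cycleRange_symm_succ, Fin.removeNth, Fin.succAbove_ne]
  rw [hperm, φ.map_perm, Equiv.Perm.sign_symm, Fin.sign_cycleRange, Units.smul_def,
    ← Int.cast_smul_eq_zsmul R]
  simp

end AlternatingMap

section Gradient

variable {V : Type*} [NormedAddCommGroup V] [InnerProductSpace ℝ V] [CompleteSpace V]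
  {f : V → ℝ} {x : V}

theorem hasFDerivAt_gradient_of_inner_eq (hf : DifferentiableAt ℝ (fderiv ℝ f) x) {G : V →L[ℝ] V}
    (hG : ∀ v w, ⟪G v, w⟫ = fderiv ℝ (fderiv ℝ f) x v w) :
    HasFDerivAt (gradient f) G x := by
  let e : StrongDual ℝ V ≃L[ℝ] V := (InnerProductSpace.toDual ℝ V).symm.toContinuousLinearEquiv
  have hG' : G = (e : StrongDual ℝ V →L[ℝ] V) ∘L fderiv ℝ (fderiv ℝ f) x := by
    ext v
    refine ext_inner_right ℝ fun w => ?_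
    rw [hG]
    exact InnerProductSpace.toDual_symm_apply.symm
  exact hG' ▸ (e : StrongDual ℝ V →L[ℝ] V).hasFDerivAt.comp x hf.hasFDerivAt

end Gradient

theorem HasFDerivAt.fderiv_alternatingMap_cons_apply {E V F : Type*} [NormedAddCommGroup E]
    [NormedSpace ℝ E] [NormedAddCommGroup V] [NormedSpace ℝ V] [FiniteDimensional ℝ V]
    [NormedAddCommGroup F] [NormedSpace ℝ F] {n : ℕ} (φ : V [⋀^Fin (n + 1)]→ₗ[ℝ] F)
    (c : Fin n → V) {g : E → V} {G : E →L[ℝ] V} {x : E} (hg : HasFDerivAt g G x) (u : E) :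
    fderiv ℝ (fun y => φ (Fin.cons (g y) c)) x u = φ (Fin.cons (G u) c) := by
  let L : V →L[ℝ] F :=
    LinearMap.toContinuousLinearMap (φ.toMultilinearMap.toLinearMap (Fin.cons 0 c) 0)
  have hL : ∀ w, L w = φ (Fin.cons w c) := fun w => by simp [L, Fin.update_cons_zero]
  simp only [← hL]
  exact congrArg (· u) (L.hasFDerivAt.comp x hg).fderiv

/-- **Theorem 2.2** (Harvey–Lawson), Euclidean (parallel) case.  For a constant-coefficient
`p`-form `φ` and a `C²` function `f` on an open set `U`, the exterior derivative of the
`(p-1)`-form `d^φ f = ∇f ⌟ φ` equals `λ_φ(Hess f)`; i.e. `dd^φ f = H^φ(f)`. -/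
theorem exterior_derivative_of_dphi_eq_lambda_hessian
    {V : Type*} [NormedAddCommGroup V] [InnerProductSpace ℝ V]
    [FiniteDimensional ℝ V] {q : ℕ}
    (φ : V [⋀^Fin (q + 1)]→ₗ[ℝ] ℝ)
    (U : Set V) (hU : IsOpen U) (f : V → ℝ) (hf : ContDiffOn ℝ 2 f U)
    (H : V → V →ₗ[ℝ] V)
    (hH : ∀ x ∈ U, ∀ v w : V, ⟪H x v, w⟫ = fderiv ℝ (fderiv ℝ f) x v w) :
    ∀ x ∈ U, ∀ v : Fin (q + 1) → V,
      (∑ i : Fin (q + 1), (-1 : ℝ) ^ (i : ℕ) *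
          fderiv ℝ (fun y => φ (Fin.cons (gradient f y) (Fin.removeNth i v))) x (v i)) =
        ∑ j, φ (Function.update v j (H x (v j))) := by
  intro x hx v
  have hDf : DifferentiableAt ℝ (fderiv ℝ f) x :=
    ((hf.contDiffAt (hU.mem_nhds hx)).fderiv_right one_add_one_eq_two.le).differentiableAt
      one_ne_zero
  have hgrad : HasFDerivAt (gradient f) (LinearMap.toContinuousLinearMap (H x)) x :=
    hasFDerivAt_gradient_of_inner_eq hDf (hH x hx)
  refine Finset.sum_congr rfl fun i _ => ?_
  rw [hgrad.fderiv_alternatingMap_cons_apply, LinearMap.coe_toContinuousLinearMap',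
    φ.map_cons_removeNth, smul_eq_mul, ← mul_assoc, ← mul_pow]
  norm_num
end

section
/- Let V be a finite-dimensional real inner product space, p ≥ 1, let φ be an alternating p-form on V of comass at most one, let U ⊆ V be open, and let f, g : U → ℝ be smooth and φ-plurisubharmonic. Then the function x ↦ log(e^{f(x)} + e^{g(x)}) is φ-plurisubharmonic on U. -/
/-!
Writing `S = e^f + e^g`, the Hessian of `log S` is
`(e^f D²f + e^g D²g) / S + e^f e^g (Df - Dg)² / S²`:
a convex combination of the Hessians of `f` and `g` plus a positive semidefinite rank-one term.
Its trace on a `φ`-plane is therefore at least a convex combination of the (nonnegative)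
traces of `D²f` and `D²g`.
-/

open scoped RealInnerProductSpace

/-- `f` is smooth and `φ`-plurisubharmonic on the open set `U`: the trace of its Hessian on
every `φ`-plane is nonnegative at every point of `U`. -/
def PshOn {V : Type*} [NormedAddCommGroup V] [InnerProductSpace ℝ V]
    {p : ℕ} (φ : V [⋀^Fin p]→ₗ[ℝ] ℝ) (U : Set V) (f : V → ℝ) : Prop :=
  ContDiffOn ℝ (⊤ : ℕ∞) f U ∧
  ∀ x ∈ U, ∀ e : Fin p → V, Orthonormal ℝ e → φ e = 1 →
    0 ≤ ∑ j, fderiv ℝ (fderiv ℝ f) x (e j) (e j)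

open Real

section LogSumExp

variable {E : Type*} [NormedAddCommGroup E] [NormedSpace ℝ E] {f g : E → ℝ} {x : E}

theorem hasFDerivAt_log_exp_add_exp (hf : DifferentiableAt ℝ f x) (hg : DifferentiableAt ℝ g x) :
    HasFDerivAt (fun y => log (exp (f y) + exp (g y)))
      ((exp (f x) + exp (g x))⁻¹ • (exp (f x) • fderiv ℝ f x + exp (g x) • fderiv ℝ g x)) x :=
  (hf.hasFDerivAt.exp.add hg.hasFDerivAt.exp).log (add_pos (exp_pos _) (exp_pos _)).ne'

theorem fderiv_fderiv_log_exp_add_exp_apply (hf : ContDiffAt ℝ 2 f x) (hg : ContDiffAt ℝ 2 g x)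
    (v : E) :
    fderiv ℝ (fderiv ℝ fun y => log (exp (f y) + exp (g y))) x v v =
      (exp (f x) * fderiv ℝ (fderiv ℝ f) x v v + exp (g x) * fderiv ℝ (fderiv ℝ g) x v v) /
          (exp (f x) + exp (g x)) +
        exp (f x) * exp (g x) * (fderiv ℝ f x v - fderiv ℝ g x v) ^ 2 /
          (exp (f x) + exp (g x)) ^ 2 := by
  have hgrad : (fderiv ℝ fun y => log (exp (f y) + exp (g y))) =ᶠ[nhds x] fun y =>
      (exp (f y) + exp (g y))⁻¹ • (exp (f y) • fderiv ℝ f y + exp (g y) • fderiv ℝ g y) := by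
    filter_upwards [hf.eventually (by simp), hg.eventually (by simp)] with y hfy hgy
    exact (hasFDerivAt_log_exp_add_exp (hfy.differentiableAt two_ne_zero)
      (hgy.differentiableAt two_ne_zero)).fderiv
  have hf' := (hf.differentiableAt two_ne_zero).hasFDerivAt
  have hg' := (hg.differentiableAt two_ne_zero).hasFDerivAt
  have hf'' := ((hf.fderiv_right_succ (n := 1)).differentiableAt one_ne_zero).hasFDerivAt
  have hg'' := ((hg.fderiv_right_succ (n := 1)).differentiableAt one_ne_zero).hasFDerivAt
  have hsum : exp (f x) + exp (g x) ≠ 0 := (add_pos (exp_pos _) (exp_pos _)).ne'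
  have hinv : HasFDerivAt (fun y => (exp (f y) + exp (g y))⁻¹) _ x :=
    (hasDerivAt_inv hsum).comp_hasFDerivAt x (hf'.exp.add hg'.exp)
  have hweighted :
      HasFDerivAt (fun y => exp (f y) • fderiv ℝ f y + exp (g y) • fderiv ℝ g y) _ x :=
    (hf'.exp.smul hf'').add (hg'.exp.smul hg'')
  have hgrad_deriv : HasFDerivAt (fun y =>
      (exp (f y) + exp (g y))⁻¹ • (exp (f y) • fderiv ℝ f y + exp (g y) • fderiv ℝ g y)) _ x :=
    hinv.smul hweighted
  rw [hgrad.fderiv_eq, hgrad_deriv.fderiv]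
  simp only [add_apply, ContinuousLinearMap.smulRight_apply, smul_apply, smul_eq_mul]
  field_simp
  ring

theorem div_le_fderiv_fderiv_log_exp_add_exp_apply (hf : ContDiffAt ℝ 2 f x)
    (hg : ContDiffAt ℝ 2 g x) (v : E) :
    (exp (f x) * fderiv ℝ (fderiv ℝ f) x v v + exp (g x) * fderiv ℝ (fderiv ℝ g) x v v) /
        (exp (f x) + exp (g x)) ≤
      fderiv ℝ (fderiv ℝ fun y => log (exp (f y) + exp (g y))) x v v := by
  rw [fderiv_fderiv_log_exp_add_exp_apply hf hg]
  exact le_add_of_nonneg_right (by positivity)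

end LogSumExp

theorem psh_log_sum_exp_general
    {V : Type*} [NormedAddCommGroup V] [InnerProductSpace ℝ V]
    {p : ℕ}
    (φ : V [⋀^Fin p]→ₗ[ℝ] ℝ)
    (U : Set V) (hU : IsOpen U) (f g : V → ℝ)
    (hf : PshOn φ U f) (hg : PshOn φ U g) :
    PshOn φ U (fun x => Real.log (Real.exp (f x) + Real.exp (g x))) := by
  obtain ⟨hf_smooth, hf_trace⟩ := hf
  obtain ⟨hg_smooth, hg_trace⟩ := hg
  refine ⟨(hf_smooth.exp.add hg_smooth.exp).log fun y _ => by positivity, ?_⟩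
  intro x hx e he hφe
  have hf2 : ContDiffAt ℝ 2 f x :=
    (hf_smooth.contDiffAt (hU.mem_nhds hx)).of_le (WithTop.coe_le_coe.mpr le_top)
  have hg2 : ContDiffAt ℝ 2 g x :=
    (hg_smooth.contDiffAt (hU.mem_nhds hx)).of_le (WithTop.coe_le_coe.mpr le_top)
  calc 0 ≤ (exp (f x) * ∑ j, fderiv ℝ (fderiv ℝ f) x (e j) (e j) +
          exp (g x) * ∑ j, fderiv ℝ (fderiv ℝ g) x (e j) (e j)) / (exp (f x) + exp (g x)) := by
        have := hf_trace x hx e he hφe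
        have := hg_trace x hx e he hφe
        positivity
    _ = ∑ j, (exp (f x) * fderiv ℝ (fderiv ℝ f) x (e j) (e j) +
          exp (g x) * fderiv ℝ (fderiv ℝ g) x (e j) (e j)) / (exp (f x) + exp (g x)) := by
        rw [← Finset.sum_div, Finset.sum_add_distrib, Finset.mul_sum, Finset.mul_sum]
    _ ≤ _ := Finset.sum_le_sum fun j _ =>
        div_le_fderiv_fderiv_log_exp_add_exp_apply hf2 hg2 (e j)

/-- **Proposition 1.5(ii)** (Harvey–Lawson).  If `f` and `g` are `φ`-plurisubharmonic, then
`log(e^f + e^g)` is `φ`-plurisubharmonic. -/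
theorem psh_log_sum_exp
    {V : Type*} [NormedAddCommGroup V] [InnerProductSpace ℝ V]
    [FiniteDimensional ℝ V] {p : ℕ} (hp : 1 ≤ p)
    (φ : V [⋀^Fin p]→ₗ[ℝ] ℝ)
    (hcomass : ∀ u : Fin p → V, Orthonormal ℝ u → φ u ≤ 1)
    (U : Set V) (hU : IsOpen U) (f g : V → ℝ)
    (hf : PshOn φ U f) (hg : PshOn φ U g) :
    PshOn φ U (fun x => Real.log (Real.exp (f x) + Real.exp (g x))) :=
  psh_log_sum_exp_general φ U hU f g hf hg
end

section
/- Let V be a finite-dimensional real inner product space and p ≥ 1. In the p-th exterior power ⋀^p V, let G be the set of unit simple p-vectors, let φ : ⋀^p V → ℝ be a linear functional with φ(ξ) ≤ 1 for all ξ ∈ G, let G(φ) = {ξ ∈ G : φ(ξ) = 1}, and let K be the convex hull of G. Then: (1) the convex hull of G(φ) equals {ξ ∈ K : φ(ξ) = 1}; (2) the convex hull of G(φ) is contained in the frontier of K; and (3) if ξ lies in the frontier of K and t·ξ belongs to the convex hull of G(φ) for some t > 0, then ξ itself belongs to the convex hull of G(φ). (Hence ch G(φ) = {φ = 1} ∩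 ∂K = Λ₊(φ) ∩ ∂K, where Λ₊(φ) is the convex cone of nonnegative multiples of elements of ch G(φ); in particular a p-vector ξ of mass norm one satisfies φ(ξ) = 1 if and only if ξ ∈ ch G(φ).) -/
/-! Since `φ ≤ 1` on `G`, a convex combination of points of `G` with `φ = 1` gives positive weight
only to `φ`-planes; hence `ch G(φ) = K ∩ {φ = 1}`. A point with `φ = 1` is not
interior to `K`, as scaling it up slightly would leave `K`. Finally `G` is symmetric (flip the sign
of one vector) and spans `⋀^p V` (it contains the wedge products of an orthonormal basis), so `0`
is an interior point of the convex body `K`; a ray from `0` then meets `∂K` only once, which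
forces `t = 1`. -/

open Filter Topology

section Face

variable {𝕜 E : Type*} [Field 𝕜] [LinearOrder 𝕜] [IsStrictOrderedRing 𝕜] [AddCommGroup E]
  [Module 𝕜 E]

theorem convexHull_sep_eq_of_forall_le {s : Set E} {f : E →ₗ[𝕜] 𝕜} {c : 𝕜}
    (hf : ∀ x ∈ s, f x ≤ c) :
    convexHull 𝕜 {x ∈ s | f x = c} = {x ∈ convexHull 𝕜 s | f x = c} := by
  refine subset_antisymm (convexHull_min (fun x hx => ⟨subset_convexHull 𝕜 s hx.1, hx.2⟩)
    ((convex_convexHull 𝕜 s).inter (convex_hyperplane f.isLinear c))) ?_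
  rintro x ⟨hx, hfx⟩
  suffices convexHull 𝕜 s ⊆ {x | f x ≤ c ∧ (f x = c → x ∈ convexHull 𝕜 {x ∈ s | f x = c})} from
    (this hx).2 hfx
  refine convexHull_min (fun x hx => ⟨hf x hx, fun h => subset_convexHull 𝕜 _ ⟨hx, h⟩⟩) ?_
  rintro x ⟨hxc, hx⟩ y ⟨hyc, hy⟩ a b ha hb hab
  have hx_gap := mul_nonneg ha (sub_nonneg.2 hxc)
  have hy_gap := mul_nonneg hb (sub_nonneg.2 hyc)
  have hgap : c - f (a • x + b • y) = a * (c - f x) + b * (c - f y) := by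
    simp only [map_add, map_smul, smul_eq_mul]
    linear_combination (-c) * hab
  refine ⟨by linarith, fun h => ?_⟩
  obtain ⟨hxa, hyb⟩ := (add_eq_zero_iff_of_nonneg hx_gap hy_gap).1 (by linarith)
  rcases ha.eq_or_lt with rfl | ha
  · simp_all
  rcases hb.eq_or_lt with rfl | hb
  · simp_all
  have hfx : f x = c := by linarith [(mul_eq_zero.1 hxa).resolve_left ha.ne']
  have hfy : f y = c := by linarith [(mul_eq_zero.1 hyb).resolve_left hb.ne']
  exact convex_convexHull 𝕜 _ (hx hfx) (hy hfy) ha.le hb.le hab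

end Face

section Topology

variable {E : Type*} [AddCommGroup E] [Module ℝ E] [TopologicalSpace E]

theorem LinearMap.map_lt_one_of_mem_interior [ContinuousSMul ℝ E] {K : Set E} {f : E →ₗ[ℝ] ℝ}
    (hf : ∀ x ∈ K, f x ≤ 1) {x : E} (hx : x ∈ interior K) : f x < 1 := by
  have hscale : ∀ᶠ s in 𝓝[>] (1 : ℝ), s • x ∈ K := by
    have : Tendsto (fun s : ℝ => s • x) (𝓝 1) (𝓝 x) := by
      simpa using (show Continuous fun s : ℝ => s • x by fun_prop).tendsto 1
    exact nhdsWithin_le_nhds (this (mem_interior_iff_mem_nhds.1 hx))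
  obtain ⟨s, hsK, hs⟩ := (hscale.and self_mem_nhdsWithin).exists
  have := hf _ hsK
  rw [map_smul, smul_eq_mul] at this
  nlinarith [show (1 : ℝ) < s from hs]

variable [IsTopologicalAddGroup E] [ContinuousConstSMul ℝ E]

theorem Convex.smul_mem_interior_of_mem_closure {K : Set E} (hK : Convex ℝ K)
    (h0 : 0 ∈ interior K) {x : E} (hx : x ∈ closure K) {t : ℝ} (ht₀ : 0 ≤ t) (ht₁ : t < 1) :
    t • x ∈ interior K := by
  simpa using hK.combo_interior_closure_mem_interior h0 hx (sub_pos.2 ht₁) ht₀ (sub_add_cancel 1 t)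

theorem Convex.eq_one_of_smul_mem_frontier {K : Set E} (hK : Convex ℝ K) (h0 : 0 ∈ interior K)
    {x : E} (hx : x ∈ frontier K) {t : ℝ} (ht : 0 < t) (htx : t • x ∈ frontier K) : t = 1 := by
  by_contra hne
  rcases lt_or_gt_of_ne hne with h | h
  · exact htx.2 (hK.smul_mem_interior_of_mem_closure h0 hx.1 ht.le h)
  · apply hx.2
    simpa [smul_smul, inv_mul_cancel₀ ht.ne'] using
      hK.smul_mem_interior_of_mem_closure h0 htx.1 (inv_nonneg.2 ht.le) (inv_lt_one_of_one_lt₀ h)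

theorem Convex.zero_mem_interior_of_neg_subset {K : Set E} (hK : Convex ℝ K) (hneg : -K ⊆ K)
    (hne : (interior K).Nonempty) : 0 ∈ interior K := by
  obtain ⟨x, hx⟩ := hne
  have hx' : -x ∈ interior K :=
    interior_maximal ((Set.neg_subset_neg.2 interior_subset).trans hneg) isOpen_interior.neg
      (by simpa using hx)
  simpa using hK.interior.midpoint_mem hx hx'

end Topology

theorem affineSpan_eq_top_of_neg_mem {k E : Type*} [DivisionRing k] [NeZero (2 : k)]
    [AddCommGroup E] [Module k E] {s : Set E} (hne : s.Nonempty) (hneg : ∀ x ∈ s, -x ∈ s)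
    (hspan : Submodule.span k s = ⊤) : affineSpan k s = ⊤ := by
  rw [AffineSubspace.affineSpan_eq_top_iff_vectorSpan_eq_top_of_nonempty k E E hne, eq_top_iff,
    ← hspan, Submodule.span_le]
  intro x hx
  have h2x : (2 : k) • x ∈ vectorSpan k s := by
    simpa [two_smul] using vsub_mem_vectorSpan k hx (hneg x hx)
  simpa [smul_smul, inv_mul_cancel₀ (two_ne_zero' k)] using (vectorSpan k s).smul_mem (2 : k)⁻¹ h2x

section FiniteDimensional

variable {E : Type*} [AddCommGroup E] [Module ℝ E] [TopologicalSpace E] [IsTopologicalAddGroup E]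
  [ContinuousSMul ℝ E] [T2Space E] [FiniteDimensional ℝ E]

theorem interior_convexHull_nonempty_of_affineSpan_eq_top {s : Set E}
    (hs : affineSpan ℝ s = ⊤) : (interior (convexHull ℝ s)).Nonempty := by
  let e : E ≃L[ℝ] EuclideanSpace ℝ (Fin (Module.finrank ℝ E)) := toEuclidean
  have hes : affineSpan ℝ (e '' s) = ⊤ :=
    (AffineEquiv.span_eq_top_iff e.toLinearEquiv.toAffineEquiv).1 hs
  have hhull : e '' convexHull ℝ s = convexHull ℝ (e '' s) :=
    e.toLinearEquiv.toLinearMap.image_convexHull s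
  have himage : e '' interior (convexHull ℝ s) = interior (convexHull ℝ (e '' s)) := by
    rw [← hhull]
    exact e.toHomeomorph.image_interior _
  exact Set.image_nonempty.1 (himage ▸ interior_convexHull_nonempty_iff_affineSpan_eq_top.2 hes)

theorem zero_mem_interior_convexHull_of_neg_mem {s : Set E} (hne : s.Nonempty)
    (hneg : ∀ x ∈ s, -x ∈ s) (hspan : Submodule.span ℝ s = ⊤) :
    0 ∈ interior (convexHull ℝ s) := by
  have hne_interior := interior_convexHull_nonempty_of_affineSpan_eq_top
    (affineSpan_eq_top_of_neg_mem hne hneg hspan)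
  refine (convex_convexHull ℝ s).zero_mem_interior_of_neg_subset ?_ hne_interior
  rw [← convexHull_neg]
  exact convexHull_mono fun x hx => by simpa using hneg _ hx

end FiniteDimensional

section UnitSimpleVectors

variable {V : Type*} [NormedAddCommGroup V] [InnerProductSpace ℝ V] {p : ℕ}

variable (V p) in
def unitSimpleVectors : Set (⋀[ℝ]^p V) :=
  exteriorPower.ιMulti ℝ p '' {e | Orthonormal ℝ e}

theorem neg_mem_unitSimpleVectors (hp : 1 ≤ p) {ξ : ⋀[ℝ]^p V}
    (hξ : ξ ∈ unitSimpleVectors V p) : -ξ ∈ unitSimpleVectors V p := by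
  classical
  obtain ⟨e, he, rfl⟩ := hξ
  let i : Fin p := ⟨0, hp⟩
  refine ⟨Function.update e i (-e i), he.orthonormal_of_forall_eq_or_eq_neg fun j => ?_, ?_⟩
  · by_cases hj : j = i
    · subst hj; simp
    · simp [hj]
  · simp only [AlternatingMap.map_update_neg, Function.update_eq_self]

theorem span_unitSimpleVectors [FiniteDimensional ℝ V] :
    Submodule.span ℝ (unitSimpleVectors V p) = ⊤ := by
  let b := stdOrthonormalBasis ℝ V
  refine eq_top_mono (Submodule.span_mono ?_)
    (exteriorPower.ιMulti_family_span_of_span ℝ (n := p) b.toBasis.span_eq)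
  rintro _ ⟨t, rfl⟩
  refine ⟨_, ?_, rfl⟩
  simpa using b.orthonormal.comp _ (Set.powersetCard.ofFinEmbEquiv.symm t).injective

end UnitSimpleVectors

/-- **Lemma 5.14 and Corollary 5.15** (Harvey–Lawson).  In the `p`-th exterior power of `V`,
let `G` be the set of unit simple `p`-vectors, `φ` a linear functional with `φ ≤ 1` on `G`
(comass at most one), `Gφ = {ξ ∈ G : φ ξ = 1}` the set of `φ`-planes, and `K` the convex
hull of `G` (the mass-norm unit ball).  Then `ch Gφ = {ξ ∈ K : φ ξ = 1}`, `ch Gφ ⊆ ∂K`, and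
any `ξ ∈ ∂K` with `t • ξ ∈ ch Gφ` for some `t > 0` already lies in `ch Gφ`.
(The topology on the exterior power is pinned down uniquely by the Hausdorff topological
vector space assumptions, since everything is finite dimensional.) -/
theorem convexHull_phi_planes_eq
    {V : Type*} [NormedAddCommGroup V] [InnerProductSpace ℝ V]
    [FiniteDimensional ℝ V] {p : ℕ} (hp : 1 ≤ p)
    [TopologicalSpace (⋀[ℝ]^p V)] [IsTopologicalAddGroup (⋀[ℝ]^p V)]
    [ContinuousSMul ℝ (⋀[ℝ]^p V)] [T2Space (⋀[ℝ]^p V)]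
    (φ : (⋀[ℝ]^p V) →ₗ[ℝ] ℝ)
    (G : Set (⋀[ℝ]^p V))
    (hG : ∀ ξ : ⋀[ℝ]^p V, ξ ∈ G ↔ ∃ e : Fin p → V, Orthonormal ℝ e ∧
      (ξ : ExteriorAlgebra ℝ V) = ExteriorAlgebra.ιMulti ℝ p e)
    (hφ : ∀ ξ ∈ G, φ ξ ≤ 1)
    (Gφ : Set (⋀[ℝ]^p V)) (hGφ : Gφ = {ξ ∈ G | φ ξ = 1})
    (K : Set (⋀[ℝ]^p V)) (hK : K = convexHull ℝ G) :
    convexHull ℝ Gφ = {ξ ∈ K | φ ξ = 1} ∧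
    convexHull ℝ Gφ ⊆ frontier K ∧
    ∀ ξ ∈ frontier K, (∃ t : ℝ, 0 < t ∧ t • ξ ∈ convexHull ℝ Gφ) → ξ ∈ convexHull ℝ Gφ := by
  obtain rfl : G = unitSimpleVectors V p := Set.ext fun ξ => (hG ξ).trans <| by
    simp [unitSimpleVectors, Subtype.ext_iff, eq_comm]
  have hφK : ∀ ξ ∈ K, φ ξ ≤ 1 := fun _ hξ =>
    convexHull_min hφ (convex_halfSpace_le φ.isLinear 1) (hK ▸ hξ)
  have hface : convexHull ℝ Gφ = {ξ ∈ K | φ ξ = 1} := hGφ ▸ hK ▸ convexHull_sep_eq_of_forall_le hφ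
  have hfrontier : convexHull ℝ Gφ ⊆ frontier K := fun ξ hξ => by
    rw [hface] at hξ
    exact ⟨subset_closure hξ.1, fun hint => (φ.map_lt_one_of_mem_interior hφK hint).ne hξ.2⟩
  refine ⟨hface, hfrontier, ?_⟩
  rintro ξ hξ ⟨t, ht, htξ⟩
  obtain ⟨η, hη⟩ : Gφ.Nonempty := convexHull_nonempty_iff.1 ⟨_, htξ⟩
  rw [hGφ] at hη
  have h0 : (0 : ⋀[ℝ]^p V) ∈ interior K := hK ▸ zero_mem_interior_convexHull_of_neg_mem ⟨η, hη.1⟩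
    (fun _ => neg_mem_unitSimpleVectors hp) span_unitSimpleVectors
  obtain rfl := (hK ▸ convex_convexHull ℝ _).eq_one_of_smul_mem_frontier h0 hξ ht (hfrontier htξ)
  simpa using htξ
end

section
/- Let V be a finite-dimensional real inner product space, p ≥ 1, let φ be an alternating p-form on V of comass at most one, let U ⊆ V be open, and let K ⊆ U be compact with (U,φ)-convex hull K̂. Then for x ∈ U: x ∉ K̂ if and only if there exists a smooth φ-plurisubharmonic function f : U → ℝ with f ≥ 0 on U, f identically zero on some neighborhood of K, and f(x) > 0. Furthermore, if there exists a smooth φ-plurisubharmonic function on U which is strictly φ-plurisubharmonic at x, then f can in addition be chosen strictly φ-plurisubharmonic at x. -/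
open scoped RealInnerProductSpace

/-- `f` is strictly `φ`-plurisubharmonic at `x`: the trace of its Hessian on every `φ`-plane
is positive at `x`. -/
def StrictAt {V : Type*} [NormedAddCommGroup V] [InnerProductSpace ℝ V]
    {p : ℕ} (φ : V [⋀^Fin p]→ₗ[ℝ] ℝ) (f : V → ℝ) (x : V) : Prop :=
  ∀ e : Fin p → V, Orthonormal ℝ e → φ e = 1 →
    0 < ∑ j, fderiv ℝ (fderiv ℝ f) x (e j) (e j)

/-- The `(U,φ)`-convex hull of a compact subset `K` of `U`. -/
def PshHull {V : Type*} [NormedAddCommGroup V] [InnerProductSpace ℝ V]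
    {p : ℕ} (φ : V [⋀^Fin p]→ₗ[ℝ] ℝ) (U : Set V) (K : Set V) : Set V :=
  {x ∈ U | ∀ f : V → ℝ, PshOn φ U f → f x ≤ sSup (f '' K)}

/-! If `x ∉ K̂`, some `φ`-psh `g` separates `x` from `K`: `g < c` on `K` and `c < g x`. Then
`f = χ ∘ (g - c)` works for a smooth ramp `χ` vanishing on `(-∞, 0]`, positive, nondecreasing and
convex on `(0, ∞)`, because `D²(χ ∘ u) = χ''(u) du ⊗ du + χ'(u) D²u`; we take
`χ t = ∫₀ᵗ exp (-1/s) ds`. Conversely such an `f` gives `f x > 0 = sup_K f`.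
For the strict version, replace `g` by `g + ε h` first: by compactness of `K` the separation
survives for small `ε > 0`, and `g + ε h` is strict at `x`. -/

open scoped ContDiff Topology

noncomputable def smoothRamp (t : ℝ) : ℝ := ∫ s in (0 : ℝ)..t, expNegInvGlue s

lemma hasDerivAt_smoothRamp (t : ℝ) : HasDerivAt smoothRamp (expNegInvGlue t) t :=
  ((expNegInvGlue.contDiff (n := 0)).continuous.integral_hasStrictDerivAt 0 t).hasDerivAt

lemma deriv_smoothRamp : deriv smoothRamp = expNegInvGlue :=
  funext fun t => (hasDerivAt_smoothRamp t).deriv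

lemma contDiff_smoothRamp : ContDiff ℝ ∞ smoothRamp :=
  contDiff_infty_iff_deriv.mpr ⟨fun t => (hasDerivAt_smoothRamp t).differentiableAt,
    deriv_smoothRamp ▸ expNegInvGlue.contDiff⟩

lemma smoothRamp_of_nonpos {t : ℝ} (ht : t ≤ 0) : smoothRamp t = 0 := by
  have hzero : Set.EqOn expNegInvGlue 0 (Set.uIcc 0 t) := fun s hs =>
    expNegInvGlue.zero_of_nonpos ((Set.uIcc_of_ge ht ▸ hs).2)
  rw [smoothRamp, intervalIntegral.integral_congr hzero, Pi.zero_def,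
    intervalIntegral.integral_zero]

lemma smoothRamp_pos {t : ℝ} (ht : 0 < t) : 0 < smoothRamp t :=
  intervalIntegral.intervalIntegral_pos_of_pos_on
    ((expNegInvGlue.contDiff (n := 0)).continuous.intervalIntegrable 0 t)
    (fun _ hs => expNegInvGlue.pos_of_pos hs.1) ht

lemma smoothRamp_nonneg (t : ℝ) : 0 ≤ smoothRamp t := by
  rcases le_or_gt t 0 with ht | ht
  · exact (smoothRamp_of_nonpos ht).ge
  · exact (smoothRamp_pos ht).le

lemma deriv_deriv_smoothRamp_nonneg (t : ℝ) : 0 ≤ deriv (deriv smoothRamp) t :=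
  deriv_smoothRamp ▸ expNegInvGlue.monotone.deriv_nonneg

section Hessian

variable {E : Type*} [NormedAddCommGroup E] [NormedSpace ℝ E] {g h : E → ℝ} {x : E}

lemma ContDiffAt.hasFDerivAt_fderiv (hg : ContDiffAt ℝ 2 g x) :
    HasFDerivAt (fderiv ℝ g) (fderiv ℝ (fderiv ℝ g) x) x :=
  ((hg.fderiv_right (m := 1) le_rfl).differentiableAt one_ne_zero).hasFDerivAt

lemma fderiv_fderiv_comp_apply {χ : ℝ → ℝ} (hχ : ContDiff ℝ 2 χ) (hg : ContDiffAt ℝ 2 g x)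
    (v : E) :
    fderiv ℝ (fderiv ℝ (fun y => χ (g y))) x v v =
      deriv (deriv χ) (g x) * fderiv ℝ g x v ^ 2 +
        deriv χ (g x) * fderiv ℝ (fderiv ℝ g) x v v := by
  have hfd : fderiv ℝ (fun y => χ (g y)) =ᶠ[𝓝 x] fun y => deriv χ (g y) • fderiv ℝ g y := by
    filter_upwards [hg.eventually (by simp)] with y hy
    exact ((hχ.differentiable two_ne_zero (g y)).hasDerivAt.comp_hasFDerivAt y
      (hy.differentiableAt two_ne_zero).hasFDerivAt).fderiv
  have hχ' : Differentiable ℝ (deriv χ) :=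
    ((contDiff_succ_iff_deriv (n := 1)).mp hχ).2.2.differentiable one_ne_zero
  have hd := ((hχ' (g x)).hasDerivAt.comp_hasFDerivAt x
    (hg.differentiableAt two_ne_zero).hasFDerivAt).smul hg.hasFDerivAt_fderiv
  rw [hfd.fderiv_eq, HasFDerivAt.fderiv (f := fun y => deriv χ (g y) • fderiv ℝ g y) hd]
  simp only [add_apply, smul_apply,
    ContinuousLinearMap.smulRight_apply, Function.comp_apply, smul_eq_mul]
  ring

lemma fderiv_fderiv_add_const_mul_apply (hg : ContDiffAt ℝ 2 g x) (hh : ContDiffAt ℝ 2 h x)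
    (ε : ℝ) (v : E) :
    fderiv ℝ (fderiv ℝ (fun y => g y + ε * h y)) x v v =
      fderiv ℝ (fderiv ℝ g) x v v + ε * fderiv ℝ (fderiv ℝ h) x v v := by
  have hfd : fderiv ℝ (fun y => g y + ε * h y) =ᶠ[𝓝 x]
      fun y => fderiv ℝ g y + ε • fderiv ℝ h y := by
    filter_upwards [hg.eventually (by simp), hh.eventually (by simp)] with y hgy hhy
    exact ((hgy.differentiableAt two_ne_zero).hasFDerivAt.add
      ((hhy.differentiableAt two_ne_zero).hasFDerivAt.const_mul ε)).fderiv
  rw [hfd.fderiv_eq, HasFDerivAt.fderiv (f := fun y => fderiv ℝ g y + ε • fderiv ℝ h y)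
    (hg.hasFDerivAt_fderiv.add (hh.hasFDerivAt_fderiv.const_smul ε))]
  simp

end Hessian

section Psh

variable {V : Type*} [NormedAddCommGroup V] [InnerProductSpace ℝ V] {p : ℕ}
  {φ : V [⋀^Fin p]→ₗ[ℝ] ℝ} {U K : Set V} {g h : V → ℝ} {x : V}

lemma PshOn.contDiffAt (hg : PshOn φ U g) (hU : IsOpen U) (hx : x ∈ U) : ContDiffAt ℝ 2 g x :=
  (hg.1.contDiffAt (hU.mem_nhds hx)).of_le (by norm_cast)

lemma PshOn.comp (hg : PshOn φ U g) (hU : IsOpen U) {χ : ℝ → ℝ} (hχ : ContDiff ℝ ∞ χ)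
    (hχ' : ∀ t, 0 ≤ deriv χ t) (hχ'' : ∀ t, 0 ≤ deriv (deriv χ) t) :
    PshOn φ U (fun y => χ (g y)) := by
  refine ⟨hχ.comp_contDiffOn hg.1, fun y hy e he hφ => ?_⟩
  simp_rw [fderiv_fderiv_comp_apply (hχ.of_le (by norm_cast)) (hg.contDiffAt hU hy),
    Finset.sum_add_distrib, ← Finset.mul_sum]
  exact add_nonneg (mul_nonneg (hχ'' _) (Finset.sum_nonneg fun j _ => sq_nonneg _))
    (mul_nonneg (hχ' _) (hg.2 y hy e he hφ))

lemma StrictAt.comp (hgx : StrictAt φ g x) (hg : ContDiffAt ℝ 2 g x) {χ : ℝ → ℝ}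
    (hχ : ContDiff ℝ 2 χ) (hχ' : 0 < deriv χ (g x)) (hχ'' : 0 ≤ deriv (deriv χ) (g x)) :
    StrictAt φ (fun y => χ (g y)) x := by
  intro e he hφ
  simp_rw [fderiv_fderiv_comp_apply hχ hg, Finset.sum_add_distrib, ← Finset.mul_sum]
  exact add_pos_of_nonneg_of_pos (mul_nonneg hχ'' (Finset.sum_nonneg fun j _ => sq_nonneg _))
    (mul_pos hχ' (hgx e he hφ))

lemma fderiv_fderiv_sub_const (g : V → ℝ) (c : ℝ) :
    fderiv ℝ (fderiv ℝ (fun y => g y - c)) = fderiv ℝ (fderiv ℝ g) :=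
  congrArg (fderiv ℝ) (funext fun _ => fderiv_sub_const c)

lemma PshOn.sub_const (hg : PshOn φ U g) (c : ℝ) : PshOn φ U (fun y => g y - c) :=
  ⟨hg.1.sub contDiffOn_const, by simpa only [fderiv_fderiv_sub_const] using hg.2⟩

lemma StrictAt.sub_const (hgx : StrictAt φ g x) (c : ℝ) : StrictAt φ (fun y => g y - c) x := by
  simpa only [StrictAt, fderiv_fderiv_sub_const] using hgx

lemma PshOn.add_const_mul (hg : PshOn φ U g) (hh : PshOn φ U h) (hU : IsOpen U) {ε : ℝ}
    (hε : 0 ≤ ε) : PshOn φ U (fun y => g y + ε * h y) := by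
  refine ⟨hg.1.add (contDiffOn_const.mul hh.1), fun y hy e he hφ => ?_⟩
  simp_rw [fderiv_fderiv_add_const_mul_apply (hg.contDiffAt hU hy) (hh.contDiffAt hU hy),
    Finset.sum_add_distrib, ← Finset.mul_sum]
  exact add_nonneg (hg.2 y hy e he hφ) (mul_nonneg hε (hh.2 y hy e he hφ))

lemma PshOn.strictAt_add_const_mul (hg : PshOn φ U g) (hh : PshOn φ U h) (hU : IsOpen U)
    (hx : x ∈ U) (hhx : StrictAt φ h x) {ε : ℝ} (hε : 0 < ε) :
    StrictAt φ (fun y => g y + ε * h y) x := by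
  intro e he hφ
  simp_rw [fderiv_fderiv_add_const_mul_apply (hg.contDiffAt hU hx) (hh.contDiffAt hU hx),
    Finset.sum_add_distrib, ← Finset.mul_sum]
  exact add_pos_of_nonneg_of_pos (hg.2 x hx e he hφ) (mul_pos hε (hhx e he hφ))

lemma PshOn.exists_nonneg_eq_zero_near_pos (hg : PshOn φ U g) (hU : IsOpen U) (hKU : K ⊆ U)
    {c : ℝ} (hKc : ∀ y ∈ K, g y < c) (hx : x ∈ U) (hcx : c < g x) :
    ∃ f : V → ℝ, PshOn φ U f ∧ (∀ y ∈ U, 0 ≤ f y) ∧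
      (∃ W : Set V, IsOpen W ∧ K ⊆ W ∧ ∀ y ∈ W ∩ U, f y = 0) ∧ 0 < f x ∧
      (StrictAt φ g x → StrictAt φ f x) := by
  have hcx' : 0 < g x - c := sub_pos.2 hcx
  refine ⟨fun y => smoothRamp (g y - c), ?_, fun y _ => smoothRamp_nonneg _, ?_,
    smoothRamp_pos hcx', fun hgx => ?_⟩
  · exact (hg.sub_const c).comp hU contDiff_smoothRamp
      (fun t => deriv_smoothRamp ▸ expNegInvGlue.nonneg t) deriv_deriv_smoothRamp_nonneg
  · refine ⟨U ∩ g ⁻¹' Set.Iio c, hg.1.continuousOn.isOpen_inter_preimage hU isOpen_Iio,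
      fun y hy => ⟨hKU hy, hKc y hy⟩, fun y hy => smoothRamp_of_nonpos ?_⟩
    exact sub_nonpos.2 hy.1.2.le
  · exact (hgx.sub_const c).comp ((hg.sub_const c).contDiffAt hU hx)
      (contDiff_smoothRamp.of_le (by norm_cast))
      (deriv_smoothRamp ▸ expNegInvGlue.pos_of_pos hcx') (deriv_deriv_smoothRamp_nonneg _)

end Psh

lemma IsCompact.exists_pos_add_mul_lt {X : Type*} [TopologicalSpace X] {K : Set X}
    (hK : IsCompact K) {g h : X → ℝ} (hg : ∀ y ∈ K, ContinuousAt g y)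
    (hh : ∀ y ∈ K, ContinuousAt h y) {c : ℝ} (hKc : ∀ y ∈ K, g y < c) {a : ℝ} (hca : c < a)
    (b : ℝ) : ∃ ε > 0, (∀ y ∈ K, g y + ε * h y < c) ∧ c < a + ε * b := by
  have hnearK : ∀ᶠ ε in 𝓝 (0 : ℝ), ∀ y ∈ K, g y + ε * h y < c :=
    hK.eventually_forall_of_forall_eventually fun y hy =>
      (((hg y hy).comp continuousAt_snd).add
        (continuousAt_fst.mul ((hh y hy).comp continuousAt_snd))).eventually_lt
        continuousAt_const (by simpa using hKc y hy)
  have hnear_a : ∀ᶠ ε in 𝓝 (0 : ℝ), c < a + ε * b :=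
    continuousAt_const.eventually_lt (by fun_prop : Continuous fun ε : ℝ => a + ε * b).continuousAt
      (by simpa using hca)
  exact (hnearK.and hnear_a).exists_gt

section Hull

variable {V : Type*} [NormedAddCommGroup V] [InnerProductSpace ℝ V] {p : ℕ}
  {φ : V [⋀^Fin p]→ₗ[ℝ] ℝ} {U K : Set V} {x : V}

lemma exists_pshOn_lt_of_notMem_pshHull (hK : IsCompact K) (hKU : K ⊆ U) (hx : x ∈ U)
    (hxK : x ∉ PshHull φ U K) :
    ∃ g : V → ℝ, ∃ c : ℝ, PshOn φ U g ∧ (∀ y ∈ K, g y < c) ∧ c < g x := by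
  simp only [PshHull, Set.mem_sep_iff, not_and, not_forall, not_le, exists_prop] at hxK
  obtain ⟨g, hg, hgx⟩ := hxK hx
  have hbdd : BddAbove (g '' K) :=
    (hK.image_of_continuousOn (hg.1.continuousOn.mono hKU)).bddAbove
  refine ⟨g, (sSup (g '' K) + g x) / 2, hg, fun y hy => ?_, by linarith⟩
  have := le_csSup hbdd (Set.mem_image_of_mem g hy)
  linarith

lemma notMem_pshHull_of_eq_zero_near {f : V → ℝ} (hf : PshOn φ U f) {W : Set V} (hKW : K ⊆ W)
    (hKU : K ⊆ U) (hW : ∀ y ∈ W ∩ U, f y = 0) (hfx : 0 < f x) : x ∉ PshHull φ U K := by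
  intro hxK
  have hsup : sSup (f '' K) ≤ 0 :=
    Real.sSup_nonpos fun _ ⟨y, hy, hfy⟩ => hfy ▸ (hW y ⟨hKW hy, hKU hy⟩).le
  exact (hxK.2 f hf).not_gt (hsup.trans_lt hfx)

end Hull

theorem notMem_hull_iff_separating_psh_general
    {V : Type*} [NormedAddCommGroup V] [InnerProductSpace ℝ V]
    {p : ℕ}
    (φ : V [⋀^Fin p]→ₗ[ℝ] ℝ)
    (U : Set V) (hU : IsOpen U) (K : Set V) (hK : IsCompact K) (hKU : K ⊆ U)
    (x : V) (hx : x ∈ U) :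
    (x ∉ PshHull φ U K ↔
      ∃ f : V → ℝ, PshOn φ U f ∧ (∀ y ∈ U, 0 ≤ f y) ∧
        (∃ W : Set V, IsOpen W ∧ K ⊆ W ∧ ∀ y ∈ W ∩ U, f y = 0) ∧ 0 < f x) ∧
    ((∃ h : V → ℝ, PshOn φ U h ∧ StrictAt φ h x) → x ∉ PshHull φ U K →
      ∃ f : V → ℝ, PshOn φ U f ∧ (∀ y ∈ U, 0 ≤ f y) ∧
        (∃ W : Set V, IsOpen W ∧ K ⊆ W ∧ ∀ y ∈ W ∩ U, f y = 0) ∧ 0 < f x ∧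
        StrictAt φ f x) := by
  refine ⟨⟨fun hxK => ?_, ?_⟩, ?_⟩
  · obtain ⟨g, c, hg, hKc, hcx⟩ := exists_pshOn_lt_of_notMem_pshHull hK hKU hx hxK
    obtain ⟨f, hf, hf0, hW, hfx, -⟩ := hg.exists_nonneg_eq_zero_near_pos hU hKU hKc hx hcx
    exact ⟨f, hf, hf0, hW, hfx⟩
  · rintro ⟨f, hf, -, ⟨W, -, hKW, hW⟩, hfx⟩
    exact notMem_pshHull_of_eq_zero_near hf hKW hKU hW hfx
  · rintro ⟨h, hh, hhx⟩ hxK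
    obtain ⟨g, c, hg, hKc, hcx⟩ := exists_pshOn_lt_of_notMem_pshHull hK hKU hx hxK
    obtain ⟨ε, hε, hKε, hcε⟩ := hK.exists_pos_add_mul_lt
      (fun y hy => (hg.contDiffAt hU (hKU hy)).continuousAt)
      (fun y hy => (hh.contDiffAt hU (hKU hy)).continuousAt) hKc hcx (h x)
    obtain ⟨f, hf, hf0, hW, hfx, hstrict⟩ :=
      (hg.add_const_mul hh hU hε.le).exists_nonneg_eq_zero_near_pos hU hKU hKε hx hcε
    exact ⟨f, hf, hf0, hW, hfx, hstrict (hg.strictAt_add_const_mul hh hU hx hhx hε)⟩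

/-- **Lemma 3.2** (Harvey–Lawson), Euclidean parallel case.  `x ∉ K̂` iff there is a
nonnegative smooth `φ`-plurisubharmonic function on `U` vanishing identically on a
neighborhood of `K` and positive at `x`; and if some `φ`-plurisubharmonic function on `U`
is strict at `x`, then `f` may in addition be chosen strict at `x`. -/
theorem notMem_hull_iff_separating_psh
    {V : Type*} [NormedAddCommGroup V] [InnerProductSpace ℝ V]
    [FiniteDimensional ℝ V] {p : ℕ} (hp : 1 ≤ p)
    (φ : V [⋀^Fin p]→ₗ[ℝ] ℝ)
    (hcomass : ∀ u : Fin p → V, Orthonormal ℝ u → φ u ≤ 1)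
    (U : Set V) (hU : IsOpen U) (K : Set V) (hK : IsCompact K) (hKU : K ⊆ U)
    (x : V) (hx : x ∈ U) :
    (x ∉ PshHull φ U K ↔
      ∃ f : V → ℝ, PshOn φ U f ∧ (∀ y ∈ U, 0 ≤ f y) ∧
        (∃ W : Set V, IsOpen W ∧ K ⊆ W ∧ ∀ y ∈ W ∩ U, f y = 0) ∧ 0 < f x) ∧
    ((∃ h : V → ℝ, PshOn φ U h ∧ StrictAt φ h x) → x ∉ PshHull φ U K →
      ∃ f : V → ℝ, PshOn φ U f ∧ (∀ y ∈ U, 0 ≤ f y) ∧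
        (∃ W : Set V, IsOpen W ∧ K ⊆ W ∧ ∀ y ∈ W ∩ U, f y = 0) ∧ 0 < f x ∧
        StrictAt φ f x) :=
  notMem_hull_iff_separating_psh_general φ U hU K hK hKU x hx
end

section
/- Let V be a finite-dimensional real inner product space, p ≥ 1, let φ be an alternating p-form on V of comass at most one, let W ⊆ V be open, and let ρ : W → ℝ be smooth such that Ω = {x ∈ W : ρ(x) < 0} is bounded with closure contained in W, the frontier of Ω equals {x ∈ W : ρ(x) = 0}, and ∇ρ(x) ≠ 0 for every x with ρ(x) = 0. Assume the boundary ∂Ω is strictly φ-convex, i.e. for every x ∈ ∂Ω and every φ-plane (e_1,…,e_p) with ⟨e_j, ∇ρ(x)⟩ = 0 for all j, one has Σ_{j=1}^p D²ρ(x)(e_j,e_j) > 0. Then there exists a compact set C ⊆ Ω such that the function x ↦ −log(−ρ(x)) is strictly φ-plurisubharmonic at every point of Ω ∖ C. -/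
/-!
Since `log (-t) = log t`, the Hessian of `g = -log (-ρ)` where `ρ ≠ 0` is
`D²g(v,v) = ((Dρ v)² - ρ D²ρ(v,v)) / ρ²`, so on a `φ`-plane `e` at a point of `Ω` its trace is
positive iff `∑ⱼ (Dρ eⱼ)² - ρ ∑ⱼ D²ρ(eⱼ,eⱼ) > 0`. At a boundary point `x₀` this holds near
`(x₀, e)` for every `φ`-plane `e`: if `e` is not tangential, the first sum is positive at `x₀`,
where `ρ = 0`; if it is, strict `φ`-convexity makes the second sum positive, while `-ρ > 0` in `Ω`.
The `φ`-planes form a compact set, so by the tube lemma `g` is strictly `φ`-plurisubharmonic on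
`Ω ∩ N` for a neighbourhood `N` of `x₀`; as `closure Ω` is compact, the points of `Ω` where this
fails lie in a compact subset of `Ω`.
-/

open scoped RealInnerProductSpace
open Filter Topology

theorem MultilinearMap.continuous_of_finiteDimensional {𝕜 ι F : Type*} {E : ι → Type*}
    [NontriviallyNormedField 𝕜] [CompleteSpace 𝕜] [Fintype ι]
    [∀ i, NormedAddCommGroup (E i)] [∀ i, NormedSpace 𝕜 (E i)] [∀ i, FiniteDimensional 𝕜 (E i)]
    [NormedAddCommGroup F] [NormedSpace 𝕜 F] (f : MultilinearMap 𝕜 E F) :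
    Continuous f := by
  classical
  let b := fun i => Module.finBasis 𝕜 (E i)
  have hexp : ⇑f = fun m => ∑ r : ∀ i, Fin (Module.finrank 𝕜 (E i)),
      (∏ i, (b i).coord (r i) (m i)) • f fun i => b i (r i) := by
    ext m
    conv_lhs => rw [← funext fun i => (b i).sum_repr (m i)]
    rw [f.map_sum]
    simp_rw [f.map_smul_univ]
    rfl
  rw [hexp]
  fun_prop

theorem isCompact_setOf_orthonormal {𝕜 ι E : Type*} [RCLike 𝕜] [Fintype ι]
    [NormedAddCommGroup E] [InnerProductSpace 𝕜 E] [FiniteDimensional 𝕜 E] :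
    IsCompact {e : ι → E | Orthonormal 𝕜 e} := by
  classical
  have := FiniteDimensional.proper_rclike 𝕜 E
  refine Metric.isCompact_of_isClosed_isBounded ?_ ?_
  · simp only [orthonormal_iff_ite, Set.ofPred_forall]
    exact isClosed_iInter fun i => isClosed_iInter fun j => isClosed_eq (by fun_prop) (by fun_prop)
  · refine (Metric.isBounded_closedBall (x := 0) (r := 1)).subset fun e he => ?_
    rw [Metric.mem_closedBall, dist_zero_right, pi_norm_le_iff_of_nonneg zero_le_one]
    exact fun i => (he.1 i).le

theorem fderiv_fderiv_neg_log_neg_apply {E : Type*} [NormedAddCommGroup E] [NormedSpace ℝ E]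
    {f : E → ℝ} {x : E} (hf : ContDiffAt ℝ 2 f x) (hx : f x ≠ 0) (v : E) :
    fderiv ℝ (fderiv ℝ fun y => -Real.log (-f y)) x v v =
      (fderiv ℝ f x v ^ 2 - f x * fderiv ℝ (fderiv ℝ f) x v v) / f x ^ 2 := by
  have hderiv : fderiv ℝ (fun y => -Real.log (-f y)) =ᶠ[𝓝 x]
      fun y => -(f y)⁻¹ • fderiv ℝ f y := by
    filter_upwards [hf.eventually (by simp), hf.continuousAt.eventually_ne hx] with y hy hy0
    simp_rw [Real.log_neg_eq_log]
    exact ((hy.differentiableAt two_ne_zero).hasFDerivAt.log hy0).neg.fderiv.trans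
      (neg_smul _ _).symm
  have hinv : HasFDerivAt (fun y => -(f y)⁻¹) (-(-(f x ^ 2)⁻¹ • fderiv ℝ f x)) x :=
    ((hasDerivAt_inv hx).comp_hasFDerivAt x
      (hf.differentiableAt two_ne_zero).hasFDerivAt).neg
  have hf' : HasFDerivAt (fderiv ℝ f) (fderiv ℝ (fderiv ℝ f) x) x :=
    ((hf.fderiv_right (m := 1) le_rfl).differentiableAt one_ne_zero).hasFDerivAt
  rw [hderiv.fderiv_eq, (hinv.fun_smul hf').fderiv]
  simp only [add_apply, smul_apply, ContinuousLinearMap.smulRight_apply, neg_apply, smul_eq_mul]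
  field_simp
  ring

theorem sum_fderiv_fderiv_neg_log_neg_apply {E ι : Type*} [NormedAddCommGroup E]
    [NormedSpace ℝ E] {f : E → ℝ} {x : E} (hf : ContDiffAt ℝ 2 f x) (hx : f x ≠ 0)
    (s : Finset ι) (e : ι → E) :
    ∑ j ∈ s, fderiv ℝ (fderiv ℝ fun y => -Real.log (-f y)) x (e j) (e j) =
      (∑ j ∈ s, fderiv ℝ f x (e j) ^ 2 - f x * ∑ j ∈ s, fderiv ℝ (fderiv ℝ f) x (e j) (e j)) /
        f x ^ 2 := by
  simp only [fderiv_fderiv_neg_log_neg_apply hf hx, ← Finset.sum_div, Finset.mul_sum,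
    Finset.sum_sub_distrib]

theorem eventually_forall_sum_sq_sub_mul_sum_pos {E ι : Type*} [NormedAddCommGroup E]
    [NormedSpace ℝ E] [Fintype ι] {f : E → ℝ} {x₀ : E} (hf : ContDiffAt ℝ 2 f x₀)
    (hx₀ : f x₀ = 0) {K : Set (ι → E)} (hK : IsCompact K)
    (hconv : ∀ e ∈ K, (∀ j, fderiv ℝ f x₀ (e j) = 0) →
      0 < ∑ j, fderiv ℝ (fderiv ℝ f) x₀ (e j) (e j)) :
    ∀ᶠ x in 𝓝 x₀, ∀ e ∈ K, f x < 0 →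
      0 < ∑ j, fderiv ℝ f x (e j) ^ 2 - f x * ∑ j, fderiv ℝ (fderiv ℝ f) x (e j) (e j) := by
  have hDf : ContinuousAt (fderiv ℝ f) x₀ :=
    (hf.fderiv_right (m := 1) le_rfl).continuousAt
  have hD2f : ContinuousAt (fderiv ℝ (fderiv ℝ f)) x₀ :=
    ((hf.fderiv_right (m := 1) le_rfl).fderiv_right (m := 0) le_rfl).continuousAt
  refine hK.eventually_forall_of_forall_eventually fun e he => ?_
  set s : E × (ι → E) → ℝ := fun z => ∑ j, fderiv ℝ f z.1 (z.2 j) ^ 2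
  set t : E × (ι → E) → ℝ := fun z => ∑ j, fderiv ℝ (fderiv ℝ f) z.1 (z.2 j) (z.2 j)
  have hs : ContinuousAt s (x₀, e) := by
    have : ContinuousAt (fun z : E × (ι → E) => fderiv ℝ f z.1) (x₀, e) :=
      hDf.comp_of_eq continuousAt_fst rfl
    fun_prop
  have ht : ContinuousAt t (x₀, e) := by
    have : ContinuousAt (fun z : E × (ι → E) => fderiv ℝ (fderiv ℝ f) z.1) (x₀, e) :=
      hD2f.comp_of_eq continuousAt_fst rfl
    fun_prop
  have hs0 : ∀ z, 0 ≤ s z := fun z => Finset.sum_nonneg fun j _ => sq_nonneg _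
  by_cases htan : ∀ j, fderiv ℝ f x₀ (e j) = 0
  · filter_upwards [continuousAt_const.eventually_lt ht (hconv e he htan)] with z hz hfz
    nlinarith [hs0 z]
  · have hpos : 0 < s (x₀, e) := by
      push Not at htan
      obtain ⟨j, hj⟩ := htan
      exact Finset.sum_pos' (fun j _ => sq_nonneg _) ⟨j, Finset.mem_univ _, by positivity⟩
    have hcont : ContinuousAt (fun z => s z - f z.1 * t z) (x₀, e) :=
      hs.sub ((hf.continuousAt.comp continuousAt_fst).mul ht)
    exact (continuousAt_const.eventually_lt hcont (by simpa [hx₀] using hpos)).mono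
      fun z hz _ => hz

theorem exists_isCompact_subset_forall_of_eventually_frontier {X : Type*} [TopologicalSpace X]
    {Ω : Set X} (hΩ : IsCompact (closure Ω)) {P : X → Prop}
    (hP : ∀ x ∈ frontier Ω, ∀ᶠ y in 𝓝 x, y ∈ Ω → P y) :
    ∃ C, IsCompact C ∧ C ⊆ Ω ∧ ∀ x ∈ Ω \ C, P x := by
  refine ⟨closure {x ∈ Ω | ¬P x},
    hΩ.of_isClosed_subset isClosed_closure (closure_mono (Set.sep_subset _ _)), ?_,
    fun x hx => not_not.1 fun h => hx.2 (subset_closure ⟨hx.1, h⟩)⟩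
  intro x hx
  by_contra hxΩ
  have hfr : x ∈ frontier Ω :=
    ⟨closure_mono (Set.sep_subset _ _) hx, fun h => hxΩ (interior_subset h)⟩
  obtain ⟨y, ⟨hyΩ, hy⟩, hPy⟩ :=
    ((mem_closure_iff_frequently.1 hx).and_eventually (hP x hfr)).exists
  exact hy (hPy hyΩ)

theorem minus_log_delta_strictly_psh_near_boundary_general
    {V : Type*} [NormedAddCommGroup V] [InnerProductSpace ℝ V]
    [FiniteDimensional ℝ V] {p : ℕ}
    (φ : V [⋀^Fin p]→ₗ[ℝ] ℝ)
    (W : Set V) (hW : IsOpen W)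
    (ρ : V → ℝ) (hρ : ContDiffOn ℝ (⊤ : ℕ∞) ρ W)
    (Ω : Set V) (hΩ : Ω = {x ∈ W | ρ x < 0})
    (hbd : Bornology.IsBounded Ω)
    (hfr : frontier Ω = {x ∈ W | ρ x = 0})
    (hconv : ∀ x ∈ frontier Ω, ∀ e : Fin p → V, Orthonormal ℝ e → φ e = 1 →
      (∀ j, ⟪e j, gradient ρ x⟫ = 0) →
      0 < ∑ j, fderiv ℝ (fderiv ℝ ρ) x (e j) (e j)) :
    ∃ C : Set V, IsCompact C ∧ C ⊆ Ω ∧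
      ∀ x ∈ Ω \ C, ∀ e : Fin p → V, Orthonormal ℝ e → φ e = 1 →
        0 < ∑ j, fderiv ℝ (fderiv ℝ (fun y => -Real.log (-ρ y))) x (e j) (e j) := by
  have hρ2 : ∀ x ∈ W, ContDiffAt ℝ 2 ρ x := fun x hx =>
    (hρ.contDiffAt (hW.mem_nhds hx)).of_le (WithTop.coe_le_coe.2 le_top)
  have hplanes : IsCompact {e : Fin p → V | Orthonormal ℝ e ∧ φ e = 1} :=
    (isCompact_setOf_orthonormal (𝕜 := ℝ)).inter_right
      (isClosed_eq φ.toMultilinearMap.continuous_of_finiteDimensional continuous_const)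
  refine exists_isCompact_subset_forall_of_eventually_frontier hbd.isCompact_closure
    fun x₀ hx₀ => ?_
  obtain ⟨hx₀W, hρx₀⟩ : x₀ ∈ {x ∈ W | ρ x = 0} := hfr ▸ hx₀
  have hnear := eventually_forall_sum_sq_sub_mul_sum_pos (hρ2 x₀ hx₀W) hρx₀ hplanes
    fun e he htan => hconv x₀ hx₀ e he.1 he.2 fun j => by
      simpa [inner_gradient_right] using htan j
  filter_upwards [hnear, hW.mem_nhds hx₀W] with x hpos hxW hxΩ e he hφe
  obtain ⟨-, hρx⟩ : x ∈ {x ∈ W | ρ x < 0} := hΩ ▸ hxΩ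
  rw [sum_fderiv_fderiv_neg_log_neg_apply (hρ2 x hxW) hρx.ne]
  exact div_pos (hpos e ⟨he, hφe⟩ hρx) (sq_pos_of_neg hρx)

/-- **Theorem 4.5** (Harvey–Lawson), Euclidean parallel case.  If `Ω = {ρ < 0}` is a compact
domain with strictly `φ`-convex boundary (the trace of `Hess ρ` on every tangential `φ`-plane
at the boundary is positive), then `-log(-ρ)` is strictly `φ`-plurisubharmonic outside a
compact subset of `Ω`. -/
theorem minus_log_delta_strictly_psh_near_boundary
    {V : Type*} [NormedAddCommGroup V] [InnerProductSpace ℝ V]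
    [FiniteDimensional ℝ V] {p : ℕ} (hp : 1 ≤ p)
    (φ : V [⋀^Fin p]→ₗ[ℝ] ℝ)
    (hcomass : ∀ u : Fin p → V, Orthonormal ℝ u → φ u ≤ 1)
    (W : Set V) (hW : IsOpen W)
    (ρ : V → ℝ) (hρ : ContDiffOn ℝ (⊤ : ℕ∞) ρ W)
    (Ω : Set V) (hΩ : Ω = {x ∈ W | ρ x < 0})
    (hbd : Bornology.IsBounded Ω) (hcl : closure Ω ⊆ W)
    (hfr : frontier Ω = {x ∈ W | ρ x = 0})
    (hgrad : ∀ x ∈ W, ρ x = 0 → gradient ρ x ≠ 0)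
    (hconv : ∀ x ∈ frontier Ω, ∀ e : Fin p → V, Orthonormal ℝ e → φ e = 1 →
      (∀ j, ⟪e j, gradient ρ x⟫ = 0) →
      0 < ∑ j, fderiv ℝ (fderiv ℝ ρ) x (e j) (e j)) :
    ∃ C : Set V, IsCompact C ∧ C ⊆ Ω ∧
      ∀ x ∈ Ω \ C, ∀ e : Fin p → V, Orthonormal ℝ e → φ e = 1 →
        0 < ∑ j, fderiv ℝ (fderiv ℝ (fun y => -Real.log (-ρ y))) x (e j) (e j) :=
  minus_log_delta_strictly_psh_near_boundary_general φ W hW ρ hρ Ω hΩ hbd hfr hconv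
end
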